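/- Let E = EuclideanSpace ℝ (Fin d), let C ⊆ E be a convex set, and let g : E → ℝ be a convex function that is differentiable with gradient ∇g. Let w* ∈ C satisfy g(w*) ≤ g(v) for all v ∈ C (so g* := g(w*) is the minimum of g over C). Let w : (0,∞) → E be a function with w(t) ∈ C for all t > 0, differentiable at every t > 0 with derivative w′(t) = (s(t) − w(t))/t where s(t) ∈ C and ⟪∇g(w(t)), s(t)⟫ ≤ ⟪∇g(w(t)), v⟫ for all v ∈ C. Assume moreover that t·g(w(t)) → 0 as t → 0⁺. Then g(w(t)) = g* for every t > 0. -/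

import Mathlib

/-!
Lyapunov argument: `L(t) = t·g(w(t))` has derivative `g(w) + ⟪∇g(w), s - w⟫`, which by the
greedy choice of `s` and the first-order convexity inequality is at most `g(w*)`. Since
`L(0⁺) = 0`, this gives `L(t) ≤ t·g(w*)`, i.e. `g(w(t)) ≤ g(w*)`, while feasibility of `w(t)`
gives the reverse inequality.
-/

open RealInnerProductSpace Filter Topology

section FirstOrderConvexity

variable {E : Type*} [NormedAddCommGroup E] [NormedSpace ℝ E]

theorem ConvexOn.add_fderiv_sub_le {S : Set E} {f : E → ℝ} {f' : E →L[ℝ] ℝ} {x y : E}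
    (hf : ConvexOn ℝ S f) (hx : x ∈ S) (hy : y ∈ S) (hf' : HasFDerivAt f f' x) :
    f x + f' (y - x) ≤ f y := by
  let ℓ : ℝ →ᵃ[ℝ] E := AffineMap.lineMap x y
  have hℓ : ∀ r : ℝ, ℓ r = x + r • (y - x) := fun r => by
    rw [AffineMap.lineMap_apply_module', add_comm]
  have hconv : ConvexOn ℝ (ℓ ⁻¹' S) (f ∘ ℓ) := hf.comp_affineMap ℓ
  have hderiv : HasDerivAt (f ∘ ℓ) (f' (y - x)) 0 := by
    have hline : HasDerivAt ℓ (y - x) 0 := by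
      rw [show ⇑ℓ = fun r => x + r • (y - x) from funext hℓ]
      simpa using ((hasDerivAt_id (0 : ℝ)).smul_const (y - x)).const_add x
    have hf'0 : HasFDerivAt f f' (ℓ 0) := by simpa [hℓ] using hf'
    exact hf'0.comp_hasDerivAt (0 : ℝ) hline
  have hslope := hconv.le_slope_of_hasDerivAt (by simpa [hℓ] using hx) (by simpa [hℓ] using hy)
    one_pos hderiv
  simp only [slope_def_field, Function.comp_apply, hℓ, zero_smul, add_zero, one_smul,
    add_sub_cancel, sub_zero, div_one] at hslope
  linarith

end FirstOrderConvexity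

section Gradient

variable {F : Type*} [NormedAddCommGroup F] [InnerProductSpace ℝ F] [CompleteSpace F]

theorem ConvexOn.add_inner_gradient_sub_le {S : Set F} {f : F → ℝ} {G x y : F}
    (hf : ConvexOn ℝ S f) (hx : x ∈ S) (hy : y ∈ S) (hG : HasGradientAt f G x) :
    f x + ⟪G, y - x⟫ ≤ f y := by
  simpa using hf.add_fderiv_sub_le hx hy (hasGradientAt_iff_hasFDerivAt.mp hG)

theorem HasGradientAt.hasDerivAt_mul_comp_of_inv_smul {f : F → ℝ} {G : F} {w : ℝ → F}
    {v : F} {t : ℝ} (hf : HasGradientAt f G (w t)) (ht : t ≠ 0)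
    (hw : HasDerivAt w (t⁻¹ • v) t) :
    HasDerivAt (fun u => u * f (w u)) (f (w t) + ⟪G, v⟫) t := by
  have hfw : HasDerivAt (fun u => f (w u)) ⟪G, t⁻¹ • v⟫ t := by
    simpa only [Function.comp_def, InnerProductSpace.toDual_apply_apply] using
      (hasGradientAt_iff_hasFDerivAt.mp hf).comp_hasDerivAt t hw
  refine ((hasDerivAt_id' t).mul hfw).congr_deriv ?_
  rw [real_inner_smul_right, one_mul, mul_inv_cancel_left₀ ht]

end Gradient

theorem le_mul_of_hasDerivAt_le_of_tendsto_zero {L L' : ℝ → ℝ} {c t : ℝ}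
    (hL : ∀ u > 0, HasDerivAt L (L' u) u) (hL' : ∀ u > 0, L' u ≤ c)
    (hL0 : Tendsto L (𝓝[>] 0) (𝓝 0)) (ht : 0 < t) : L t ≤ c * t := by
  have hanti : AntitoneOn (fun u => L u - c * u) (Set.Ioi 0) := by
    have hderiv : ∀ u > 0, HasDerivAt (fun u => L u - c * u) (L' u - c) u := fun u hu =>
      ((hL u hu).sub ((hasDerivAt_id' u).const_mul c)).congr_deriv (by rw [mul_one])
    refine antitoneOn_of_hasDerivWithinAt_nonpos (f' := fun u => L' u - c) (convex_Ioi 0)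
      (fun u hu => (hderiv u hu).continuousAt.continuousWithinAt) (fun u hu => ?_) (fun u hu => ?_)
    · rw [interior_Ioi] at hu ⊢
      exact (hderiv u hu).hasDerivWithinAt
    · rw [interior_Ioi] at hu
      linarith [hL' u hu]
  have hlim : Tendsto (fun u => L u - c * u) (𝓝[>] 0) (𝓝 0) := by
    simpa using hL0.sub ((continuous_const_mul c).tendsto' 0 0 (mul_zero c) |>.mono_left
      nhdsWithin_le_nhds)
  have hnonpos : L t - c * t ≤ 0 := by
    refine ge_of_tendsto hlim ?_
    filter_upwards [Ioo_mem_nhdsGT ht] with u hu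
    exact hanti hu.1 ht hu.2.le
  linarith

theorem fluid_limit_optimal_cost_general
    {d : ℕ} (C : Set (EuclideanSpace ℝ (Fin d)))
    (g : EuclideanSpace ℝ (Fin d) → ℝ) (hg : ConvexOn ℝ Set.univ g)
    (g' : EuclideanSpace ℝ (Fin d) → EuclideanSpace ℝ (Fin d))
    (hg' : ∀ x, HasGradientAt g (g' x) x)
    (wstar : EuclideanSpace ℝ (Fin d)) (hwstar : wstar ∈ C)
    (hmin : ∀ v ∈ C, g wstar ≤ g v)
    (w s : ℝ → EuclideanSpace ℝ (Fin d))
    (hwC : ∀ t > (0 : ℝ), w t ∈ C)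
    (hw' : ∀ t > (0 : ℝ), HasDerivAt w (t⁻¹ • (s t - w t)) t)
    (hopt : ∀ t > (0 : ℝ), ∀ v ∈ C, ⟪g' (w t), s t⟫ ≤ ⟪g' (w t), v⟫)
    (hzero : Tendsto (fun t => t * g (w t)) (nhdsWithin 0 (Set.Ioi 0)) (nhds 0)) :
    ∀ t > (0 : ℝ), g (w t) = g wstar := by
  intro t ht
  have hdescent : ∀ u > (0 : ℝ), g (w u) + ⟪g' (w u), s u - w u⟫ ≤ g wstar := fun u hu =>
    calc g (w u) + ⟪g' (w u), s u - w u⟫ ≤ g (w u) + ⟪g' (w u), wstar - w u⟫ := by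
          rw [inner_sub_right, inner_sub_right]
          linarith [hopt u hu wstar hwstar]
      _ ≤ g wstar :=
          hg.add_inner_gradient_sub_le (Set.mem_univ _) (Set.mem_univ _) (hg' (w u))
  have hupper : t * g (w t) ≤ g wstar * t :=
    le_mul_of_hasDerivAt_le_of_tendsto_zero
      (fun u hu => (hg' (w u)).hasDerivAt_mul_comp_of_inv_smul hu.ne' (hw' u hu)) hdescent
      hzero ht
  have hlower : g wstar ≤ g (w t) := hmin _ (hwC t ht)
  exact le_antisymm (le_of_mul_le_mul_left (by linarith) ht) hlower

/-- Lemma 7 of the paper (lem_optimal_cost): along a greedy primal–dual trajectory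
`w` in the convex feasible set `C` with `w′(t) = (s(t) − w(t))/t`, where `s(t) ∈ C`
minimizes the inner product with the gradient `∇g(w(t))` over `C`, and with
`t·g(w(t)) → 0` as `t → 0⁺`, the convex objective `g` attains its minimum over `C`
at every point of the trajectory: `g(w(t)) = g(w*)` for all `t > 0`. -/
theorem fluid_limit_optimal_cost
    {d : ℕ} (C : Set (EuclideanSpace ℝ (Fin d))) (hC : Convex ℝ C)
    (g : EuclideanSpace ℝ (Fin d) → ℝ) (hg : ConvexOn ℝ Set.univ g)
    (g' : EuclideanSpace ℝ (Fin d) → EuclideanSpace ℝ (Fin d))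
    (hg' : ∀ x, HasGradientAt g (g' x) x)
    (wstar : EuclideanSpace ℝ (Fin d)) (hwstar : wstar ∈ C)
    (hmin : ∀ v ∈ C, g wstar ≤ g v)
    (w s : ℝ → EuclideanSpace ℝ (Fin d))
    (hwC : ∀ t > (0 : ℝ), w t ∈ C)
    (hsC : ∀ t > (0 : ℝ), s t ∈ C)
    (hw' : ∀ t > (0 : ℝ), HasDerivAt w (t⁻¹ • (s t - w t)) t)
    (hopt : ∀ t > (0 : ℝ), ∀ v ∈ C, ⟪g' (w t), s t⟫ ≤ ⟪g' (w t), v⟫)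
    (hzero : Tendsto (fun t => t * g (w t)) (nhdsWithin 0 (Set.Ioi 0)) (nhds 0)) :
    ∀ t > (0 : ℝ), g (w t) = g wstar :=
  fluid_limit_optimal_cost_general C g hg g' hg' wstar hwstar hmin w s hwC hw' hopt hzero
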